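/- arXiv:0711.0951 — 5 statements merged into one kernel-verified Lean document; each statement's English description precedes it below -/
import Mathlib

section
/- Let ψ, f ∈ L²(ℝ²) and let K : SE(2) → ℝ be integrable with respect to the Haar measure μ. Then for every g ∈ SE(2), the SE(2)-convolution of K with the orientation score of f is again an orientation score: ∫_{SE(2)} K(h⁻¹ g) (W_ψ f)(h) dμ(h) = (W_{ψ̃} f)(g), where ψ̃ ∈ L²(ℝ²) is the Bochner integral ψ̃ = ∫_{SE(2)} (U_{h⁻¹} ψ) · K(h) dμ(h). -/
/-!
STATEMENT 4: For ψ, f ∈ L²(ℝ²) and K ∈ L¹(SE(2)) (Haar measure), the SE(2)-convolution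
of K with the orientation score W_ψ f is again an orientation score:
∫_{SE(2)} K(h⁻¹g) (W_ψ f)(h) dμ(h) = (W_{ψ̃} f)(g), where
ψ̃ = ∫_{SE(2)} (U_{h⁻¹} ψ) · K(h) dμ(h), i.e. ψ̃(y) = ∫_{SE(2)} K(h) · ψ(R_{θ_h} y + x_h) dμ(h).
Here SE(2) is realized as ℝ² × (ℝ/2πℤ), with Haar measure the product of Lebesgue measure
on ℝ² and the Haar (Lebesgue) measure on ℝ/2πℤ = Real.Angle, and for h = (x, θ),
h⁻¹ g = (R_θ⁻¹(x_g − x), θ_g − θ), (U_{h⁻¹}ψ)(y) = ψ(R_θ y + x).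
-/

open MeasureTheory Real

instance : Fact (0 < 2 * π) := ⟨by positivity⟩

/-- The Haar (Lebesgue) measure on the circle of angles `ℝ/2πℤ`, of total mass 2π. -/
noncomputable instance : MeasureSpace Real.Angle :=
  inferInstanceAs (MeasureSpace (AddCircle (2 * π)))

/-- Counterclockwise rotation of ℝ² by an angle `θ ∈ ℝ/2πℤ`. -/
noncomputable def rotA (θ : Real.Angle) (v : EuclideanSpace ℝ (Fin 2)) :
    EuclideanSpace ℝ (Fin 2) :=
  (EuclideanSpace.equiv (Fin 2) ℝ).symm
    ![θ.cos * v 0 - θ.sin * v 1, θ.sin * v 0 + θ.cos * v 1]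

/-- The orientation score `(W_ψ f)(x, θ) = ∫ conj(ψ(R_θ⁻¹ (y - x))) f(y) dy`. -/
noncomputable def WscoreA (ψ f : EuclideanSpace ℝ (Fin 2) → ℂ)
    (x : EuclideanSpace ℝ (Fin 2)) (θ : Real.Angle) : ℂ :=
  ∫ y, (starRingEnd ℂ) (ψ (rotA (-θ) (y - x))) * f y

/-! Exchange the two integrals by Fubini: `K(h⁻¹g) · conj ψ(h⁻¹y) · f(y)` is integrable on
`SE(2) × ℝ²`, since by Cauchy–Schwarz its `y`-integral is at most `|K(h⁻¹g)| ‖ψ‖₂ ‖f‖₂`.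
For fixed `y`, the Haar-measure-preserving substitution `h = g k⁻¹` turns `h⁻¹ · y` into
`k · (g⁻¹ · y)`, so the inner integral over `SE(2)` is `conj ψ̃(g⁻¹ · y)`. -/

instance : BorelSpace Real.Angle := inferInstanceAs (BorelSpace (AddCircle (2 * π)))
instance : (volume : Measure Real.Angle).IsNegInvariant :=
  inferInstanceAs ((volume : Measure (AddCircle (2 * π))).IsNegInvariant)
instance : (volume : Measure Real.Angle).IsAddLeftInvariant :=
  inferInstanceAs ((volume : Measure (AddCircle (2 * π))).IsAddLeftInvariant)
instance : IsFiniteMeasure (volume : Measure Real.Angle) :=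
  inferInstanceAs (IsFiniteMeasure (volume : Measure (AddCircle (2 * π))))

local notation "ℝ²" => EuclideanSpace ℝ (Fin 2)
local notation "SE(2)" => ℝ² × Real.Angle

theorem MeasureTheory.MeasurePreserving.skew_product_snd {α β γ δ : Type*} [MeasurableSpace α]
    [MeasurableSpace β] [MeasurableSpace γ] [MeasurableSpace δ] {μa : Measure α} {μb : Measure β}
    {μc : Measure γ} {μd : Measure δ} [SFinite μa] [SFinite μb] [SFinite μc] [SFinite μd]
    {f : β → δ} (hf : MeasurePreserving f μb μd) {g : β → α → γ}
    (hgm : Measurable (Function.uncurry g)) (hg : ∀ b, MeasurePreserving (g b) μa μc) :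
    MeasurePreserving (fun p : α × β => (g p.2 p.1, f p.2)) (μa.prod μb) (μc.prod μd) :=
  Measure.measurePreserving_swap.comp <|
    (hf.skew_product hgm (.of_forall fun b => (hg b).map_eq)).comp Measure.measurePreserving_swap

section

variable {α 𝕜 : Type*} [MeasurableSpace α] {ν : Measure α} [RCLike 𝕜]

lemma integral_norm_comp_mul_norm_le {A : α → α} (hA : MeasurePreserving A ν ν) {ψ f : α → 𝕜}
    (hψ : MemLp ψ 2 ν) (hf : MemLp f 2 ν) :
    ∫ y, ‖ψ (A y)‖ * ‖f y‖ ∂ν ≤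
      (∫ y, ‖ψ y‖ ^ (2 : ℝ) ∂ν) ^ (1 / 2 : ℝ) * (∫ y, ‖f y‖ ^ (2 : ℝ) ∂ν) ^ (1 / 2 : ℝ) := by
  have hψA := hψ.comp_measurePreserving hA
  rw [← ENNReal.ofReal_ofNat] at hψA hf
  have hnorm : ∫ y, ‖ψ (A y)‖ ^ (2 : ℝ) ∂ν = ∫ y, ‖ψ y‖ ^ (2 : ℝ) ∂ν := by
    conv_rhs => rw [← hA.map_eq]
    refine (integral_map (f := fun y => ‖ψ y‖ ^ (2 : ℝ)) hA.aemeasurable ?_).symm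
    rw [hA.map_eq]
    exact (hψ.1.norm.aemeasurable.pow_const _).aestronglyMeasurable
  rw [← hnorm]
  exact integral_mul_norm_le_Lp_mul_Lq Real.HolderConjugate.two_two hψA hf

lemma integrable_prod_smul_conj_comp_mul {X : Type*} [MeasurableSpace X] {μ : Measure X}
    [SFinite μ] [SFinite ν] {K : X → ℝ} (hK : Integrable K μ) {A : X → α → α}
    (hAm : Measurable (Function.uncurry A)) (hA : ∀ x, MeasurePreserving (A x) ν ν)
    {ψ f : α → 𝕜} (hψ : MemLp ψ 2 ν) (hf : MemLp f 2 ν) :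
    Integrable (fun p : X × α => K p.1 • (starRingEnd 𝕜 (ψ (A p.1 p.2)) * f p.2)) (μ.prod ν) := by
  have hskew : MeasurePreserving (fun p : X × α => (p.1, A p.1 p.2)) (μ.prod ν) (μ.prod ν) :=
    (MeasurePreserving.id μ).skew_product hAm (.of_forall fun x => (hA x).map_eq)
  have hψA : AEStronglyMeasurable (fun p : X × α => ψ (A p.1 p.2)) (μ.prod ν) :=
    (hψ.1.comp_quasiMeasurePreserving Measure.quasiMeasurePreserving_snd)
      |>.comp_quasiMeasurePreserving hskew.quasiMeasurePreserving
  have hmeas : AEStronglyMeasurable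
      (fun p : X × α => K p.1 • (starRingEnd 𝕜 (ψ (A p.1 p.2)) * f p.2)) (μ.prod ν) :=
    (hK.1.comp_quasiMeasurePreserving Measure.quasiMeasurePreserving_fst).smul
      ((RCLike.continuous_conj.comp_aestronglyMeasurable hψA).mul
        (hf.1.comp_quasiMeasurePreserving Measure.quasiMeasurePreserving_snd))
  rw [integrable_prod_iff hmeas]
  refine ⟨.of_forall fun x => ?_, ?_⟩
  · exact (((hψ.comp_measurePreserving (hA x)).star).integrable_mul hf).smul (K x)
  refine (hK.norm.mul_const ((∫ y, ‖ψ y‖ ^ (2 : ℝ) ∂ν) ^ (1 / 2 : ℝ) *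
    (∫ y, ‖f y‖ ^ (2 : ℝ) ∂ν) ^ (1 / 2 : ℝ))).mono' hmeas.norm.integral_prod_right'
    (.of_forall fun x => ?_)
  rw [Real.norm_of_nonneg (integral_nonneg fun y => norm_nonneg _)]
  simp only [norm_smul, norm_mul, RCLike.norm_conj]
  rw [integral_const_mul]
  exact mul_le_mul_of_nonneg_left (integral_norm_comp_mul_norm_le (hA x) hψ hf) (norm_nonneg _)

end

lemma rotA_apply_zero (θ : Real.Angle) (v : ℝ²) :
    rotA θ v 0 = θ.cos * v 0 - θ.sin * v 1 := rfl

lemma rotA_apply_one (θ : Real.Angle) (v : ℝ²) :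
    rotA θ v 1 = θ.sin * v 0 + θ.cos * v 1 := rfl

lemma rotA_zero (v : ℝ²) : rotA 0 v = v := by
  ext i; fin_cases i <;> simp [rotA_apply_zero, rotA_apply_one]

lemma rotA_add (a b : Real.Angle) (v : ℝ²) : rotA (a + b) v = rotA a (rotA b v) := by
  ext i; fin_cases i <;>
    simp only [Fin.zero_eta, Fin.mk_one, rotA_apply_zero, rotA_apply_one, Real.Angle.cos_add,
      Real.Angle.sin_add] <;> ring

lemma rotA_neg_rotA (θ : Real.Angle) (v : ℝ²) : rotA (-θ) (rotA θ v) = v := by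
  rw [← rotA_add, neg_add_cancel, rotA_zero]

lemma rotA_rotA_neg (θ : Real.Angle) (v : ℝ²) : rotA θ (rotA (-θ) v) = v := by
  simpa using rotA_neg_rotA (-θ) v

noncomputable def rotLI (θ : Real.Angle) : ℝ² ≃ₗᵢ[ℝ] ℝ² where
  toFun := rotA θ
  invFun := rotA (-θ)
  map_add' u v := by
    ext i; fin_cases i <;>
      simp only [Fin.zero_eta, Fin.mk_one, rotA_apply_zero, rotA_apply_one, PiLp.add_apply] <;>
      ring
  map_smul' c v := by
    ext i; fin_cases i <;>
      simp only [Fin.zero_eta, Fin.mk_one, rotA_apply_zero, rotA_apply_one, PiLp.smul_apply,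
        smul_eq_mul, RingHom.id_apply] <;>
      ring
  left_inv := rotA_neg_rotA θ
  right_inv := rotA_rotA_neg θ
  norm_map' v := by
    change ‖rotA θ v‖ = ‖v‖
    simp only [EuclideanSpace.norm_eq, Fin.sum_univ_two, Real.norm_eq_abs, sq_abs,
      rotA_apply_zero, rotA_apply_one]
    congr 1
    linear_combination (v 0 ^ 2 + v 1 ^ 2) * θ.cos_sq_add_sin_sq

lemma coe_rotLI (θ : Real.Angle) : ⇑(rotLI θ) = rotA θ := rfl

lemma continuous_rotA_uncurry : Continuous (Function.uncurry rotA) := by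
  have := (EuclideanSpace.equiv (Fin 2) ℝ).symm.continuous
  have := Real.Angle.continuous_cos
  have := Real.Angle.continuous_sin
  unfold rotA
  fun_prop

lemma measurePreserving_rotA (θ : Real.Angle) : MeasurePreserving (rotA θ) :=
  (rotLI θ).measurePreserving

/- In group notation on `SE(2) = ℝ² ⋊ SO(2)` acting on `ℝ²`: `seAct h y = h · y`,
`seInvAct h y = h⁻¹ · y`, `seInvMul h g = h⁻¹ g` and `seMulInv g k = g k⁻¹`. -/

noncomputable def seAct (h : SE(2)) (y : ℝ²) : ℝ² := rotA h.2 y + h.1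

noncomputable def seInvAct (h : SE(2)) (y : ℝ²) : ℝ² := rotA (-h.2) (y - h.1)

noncomputable def seInvMul (h g : SE(2)) : SE(2) := (seInvAct h g.1, g.2 - h.2)

noncomputable def seMulInv (g k : SE(2)) : SE(2) := (g.1 - rotA (g.2 - k.2) k.1, g.2 - k.2)

lemma seInvMul_seMulInv (g k : SE(2)) : seInvMul (seMulInv g k) g = k := by
  refine Prod.ext ?_ (sub_sub_cancel _ _)
  simp only [seInvMul, seInvAct, seMulInv, sub_sub_cancel, rotA_neg_rotA]

lemma seMulInv_seInvMul (g h : SE(2)) : seMulInv g (seInvMul h g) = h := by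
  refine Prod.ext ?_ (sub_sub_cancel _ _)
  simp only [seInvMul, seInvAct, seMulInv, sub_sub_cancel, rotA_rotA_neg]

lemma seInvAct_seMulInv (g k : SE(2)) (y : ℝ²) :
    seInvAct (seMulInv g k) y = seAct k (seInvAct g y) := by
  have hy : y - (g.1 - rotA (g.2 - k.2) k.1) = (y - g.1) + rotA (g.2 - k.2) k.1 := by abel
  simp only [seInvAct, seMulInv, seAct]
  rw [hy, ← coe_rotLI, map_add, coe_rotLI, rotA_neg_rotA, ← rotA_add, neg_sub, sub_eq_add_neg]

lemma measurePreserving_seInvAct (h : SE(2)) : MeasurePreserving (seInvAct h) :=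
  (measurePreserving_rotA _).comp (measurePreserving_sub_right volume h.1)

lemma continuous_seInvAct_uncurry : Continuous (Function.uncurry seInvAct) :=
  continuous_rotA_uncurry.comp <| .prodMk (by fun_prop) (by fun_prop)

lemma continuous_seInvMul_left (g : SE(2)) : Continuous (fun h => seInvMul h g) :=
  .prodMk (continuous_seInvAct_uncurry.comp <| .prodMk continuous_id continuous_const)
    (by fun_prop)

lemma continuous_seMulInv (g : SE(2)) : Continuous (seMulInv g) :=
  .prodMk (continuous_const.sub <|
    continuous_rotA_uncurry.comp <| .prodMk (by fun_prop) (by fun_prop)) (by fun_prop)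

lemma measurePreserving_seInvMul_left (g : SE(2)) :
    MeasurePreserving (fun h => seInvMul h g) := by
  rw [Measure.volume_eq_prod]
  refine (Measure.measurePreserving_sub_left volume g.2).skew_product_snd ?_ fun θ =>
    (measurePreserving_rotA (-θ)).comp (Measure.measurePreserving_sub_left volume g.1)
  exact (continuous_rotA_uncurry.comp <| .prodMk (by fun_prop) (by fun_prop)).measurable

noncomputable def seInvMulEquiv (g : SE(2)) : SE(2) ≃ᵐ SE(2) where
  toFun h := seInvMul h g
  invFun := seMulInv g
  left_inv := seMulInv_seInvMul g
  right_inv := seInvMul_seMulInv g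
  measurable_toFun := (continuous_seInvMul_left g).measurable
  measurable_invFun := (continuous_seMulInv g).measurable

lemma integral_seInvMul_smul {E : Type*} [NormedAddCommGroup E] [NormedSpace ℝ E]
    (K : SE(2) → ℝ) (φ : ℝ² → E) (g : SE(2)) (y : ℝ²) :
    ∫ h, K (seInvMul h g) • φ (seInvAct h y) = ∫ k, K k • φ (seAct k (seInvAct g y)) := by
  have he : MeasurePreserving (seInvMulEquiv g) := measurePreserving_seInvMul_left g
  rw [← he.symm.integral_comp']
  congr 1 with k
  change K (seInvMul (seMulInv g k) g) • φ (seInvAct (seMulInv g k) y) = _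
  rw [seInvMul_seMulInv, seInvAct_seMulInv]


theorem stmt_4 (ψ f : EuclideanSpace ℝ (Fin 2) → ℂ)
    (hψ : MemLp ψ 2 volume) (hf : MemLp f 2 volume)
    (K : EuclideanSpace ℝ (Fin 2) × Real.Angle → ℝ) (hK : Integrable K)
    (g : EuclideanSpace ℝ (Fin 2) × Real.Angle) :
    (∫ h : EuclideanSpace ℝ (Fin 2) × Real.Angle,
        K (rotA (-h.2) (g.1 - h.1), g.2 - h.2) • WscoreA ψ f h.1 h.2)
      = WscoreA
          (fun y => ∫ h : EuclideanSpace ℝ (Fin 2) × Real.Angle, K h • ψ (rotA h.2 y + h.1))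
          f g.1 g.2 := by
  have hF := integrable_prod_smul_conj_comp_mul
    ((measurePreserving_seInvMul_left g).integrable_comp_of_integrable hK)
    continuous_seInvAct_uncurry.measurable measurePreserving_seInvAct hψ hf
  calc (∫ h : SE(2), K (seInvMul h g) • ∫ y, starRingEnd ℂ (ψ (seInvAct h y)) * f y)
      = ∫ h : SE(2), ∫ y, K (seInvMul h g) • (starRingEnd ℂ (ψ (seInvAct h y)) * f y) := by
        simp only [integral_smul]
    _ = ∫ y, ∫ h : SE(2), K (seInvMul h g) • (starRingEnd ℂ (ψ (seInvAct h y)) * f y) := by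
        rw [Measure.volume_eq_prod] at hF ⊢
        exact integral_integral_swap hF
    _ = ∫ y, starRingEnd ℂ (∫ k : SE(2), K k • ψ (seAct k (seInvAct g y))) * f y := by
        congr 1 with y
        rw [← integral_seInvMul_smul, ← integral_conj, ← integral_mul_const]
        simp only [RCLike.conj_smul, smul_mul_assoc]
end

section
/- Let D₁₁, D₂₂ > 0. The function K_s(x, y, θ) = (1/(D₂₂·√D₁₁)) · (4πs)^{−3/2} · exp(−(θ²/D₁₁ + (x² + y²)/D₂₂)/(4s)) is smooth on ℝ³ × (0,∞), satisfies the left-invariant heat equation ∂K/∂s = D₁₁ ∂_θ(∂_θ K) + D₂₂ (∂_ξ(∂_ξ K) + ∂_η(∂_η K)) at every (x, y, θ) ∈ ℝ³ and s > 0, and has total mass one: ∫_{ℝ³} K_s(x, y, θ) dx dy dθ = 1 for every s > 0. -/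
/-!
STATEMENT 8: For D₁₁, D₂₂ > 0, the kernel
K_s(x,y,θ) = (1/(D₂₂√D₁₁)) (4πs)^{−3/2} exp(−(θ²/D₁₁ + (x²+y²)/D₂₂)/(4s))
is smooth on ℝ³ × (0,∞), solves the left-invariant heat equation
∂K/∂s = D₁₁ ∂_θ² K + D₂₂ (∂_ξ² + ∂_η²) K, and has total mass one.
Points are written p = (x, y, θ) : ℝ × ℝ × ℝ.
-/

open Real MeasureTheory
open scoped ContDiff

/-- The left-invariant derivative `∂_θ f`. -/
noncomputable def Atheta (f : ℝ × ℝ × ℝ → ℝ) (p : ℝ × ℝ × ℝ) : ℝ :=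
  fderiv ℝ f p (0, 0, 1)

/-- The left-invariant derivative `∂_ξ f = cos θ ∂_x f + sin θ ∂_y f`. -/
noncomputable def Axi (f : ℝ × ℝ × ℝ → ℝ) (p : ℝ × ℝ × ℝ) : ℝ :=
  fderiv ℝ f p (Real.cos p.2.2, Real.sin p.2.2, 0)

/-- The left-invariant derivative `∂_η f = −sin θ ∂_x f + cos θ ∂_y f`. -/
noncomputable def Aeta (f : ℝ × ℝ × ℝ → ℝ) (p : ℝ × ℝ × ℝ) : ℝ :=
  fderiv ℝ f p (-Real.sin p.2.2, Real.cos p.2.2, 0)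

/-- The contour-enhancement heat kernel on SE(2) in the case D₂₂ = D₃₃
(angular variable unwrapped to θ ∈ ℝ). -/
noncomputable def Kheat (D11 D22 s : ℝ) (p : ℝ × ℝ × ℝ) : ℝ :=
  (1 / (D22 * Real.sqrt D11)) * (4 * π * s) ^ (-(3 : ℝ) / 2) *
    Real.exp (-(p.2.2 ^ 2 / D11 + (p.1 ^ 2 + p.2.1 ^ 2) / D22) / (4 * s))

/-!
Every left-invariant field `X ∈ {∂_θ, ∂_ξ, ∂_η}` is a derivation, and on the kernel it acts as
`X K = g_X K` with `g_θ = -θ/(2 D₁₁ s)`, `g_ξ = -ξ/(2 D₂₂ s)`, `g_η = -η/(2 D₂₂ s)`, where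
`ξ = x cos θ + y sin θ` and `η = -x sin θ + y cos θ` are the coordinates of `(x, y)` in the
moving frame. Hence `X² K = (X g_X + g_X²) K`, and `X g_X` is the constant `-1/(2 D s)` because
`∂_ξ ξ = ∂_η η = 1`. Since `ξ² + η² = x² + y²`, the right-hand side of the heat equation becomes
`((θ²/D₁₁ + (x² + y²)/D₂₂)/(4s²) - 3/(2s)) K`, which is `∂_s K`.
The kernel is a product of three one-dimensional Gaussians, which gives the total mass.
-/

section FieldDeriv

variable {E : Type*} [NormedAddCommGroup E] [NormedSpace ℝ E] {V : E → E} {f g : E → ℝ} {p : E}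

noncomputable def fieldDeriv (V : E → E) (f : E → ℝ) (p : E) : ℝ :=
  fderiv ℝ f p (V p)

lemma fieldDeriv_mul (hg : DifferentiableAt ℝ g p) (hf : DifferentiableAt ℝ f p) :
    fieldDeriv V (fun q => g q * f q) p = fieldDeriv V g p * f p + g p * fieldDeriv V f p := by
  simp only [fieldDeriv, fderiv_fun_mul hg hf, add_apply, smul_apply, smul_eq_mul]
  ring

lemma fieldDeriv_fieldDeriv_of_eq_mul (h : fieldDeriv V f = fun q => g q * f q)
    (hg : DifferentiableAt ℝ g p) (hf : DifferentiableAt ℝ f p) :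
    fieldDeriv V (fieldDeriv V f) p = (fieldDeriv V g p + g p ^ 2) * f p := by
  rw [h, fieldDeriv_mul hg hf, h]
  ring

end FieldDeriv

lemma Atheta_eq_fieldDeriv : Atheta = fieldDeriv fun _ => (0, 0, 1) := rfl

lemma Axi_eq_fieldDeriv : Axi = fieldDeriv fun p => (cos p.2.2, sin p.2.2, 0) := rfl

lemma Aeta_eq_fieldDeriv : Aeta = fieldDeriv fun p => (-sin p.2.2, cos p.2.2, 0) := rfl

section MovingFrame

noncomputable def xiCoord (p : ℝ × ℝ × ℝ) : ℝ := p.1 * cos p.2.2 + p.2.1 * sin p.2.2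

noncomputable def etaCoord (p : ℝ × ℝ × ℝ) : ℝ := -p.1 * sin p.2.2 + p.2.1 * cos p.2.2

lemma xiCoord_sq_add_etaCoord_sq (p : ℝ × ℝ × ℝ) :
    xiCoord p ^ 2 + etaCoord p ^ 2 = p.1 ^ 2 + p.2.1 ^ 2 := by
  unfold xiCoord etaCoord
  linear_combination (p.1 ^ 2 + p.2.1 ^ 2) * sin_sq_add_cos_sq p.2.2

lemma differentiable_xiCoord : Differentiable ℝ xiCoord := by
  unfold xiCoord
  fun_prop

lemma differentiable_etaCoord : Differentiable ℝ etaCoord := by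
  unfold etaCoord
  fun_prop

lemma fderiv_xiCoord_apply (p v : ℝ × ℝ × ℝ) :
    fderiv ℝ xiCoord p v = v.1 * cos p.2.2 + v.2.1 * sin p.2.2 + etaCoord p * v.2.2 := by
  have h : HasFDerivAt xiCoord _ p :=
    (hasFDerivAt_fst.fun_mul hasFDerivAt_snd.snd.cos).fun_add
      (hasFDerivAt_snd.fst.fun_mul hasFDerivAt_snd.snd.sin)
  rw [h.fderiv]
  simp only [add_apply, smul_apply, ContinuousLinearMap.comp_apply, ContinuousLinearMap.coe_fst',
    ContinuousLinearMap.coe_snd', smul_eq_mul, etaCoord]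
  ring

lemma fderiv_etaCoord_apply (p v : ℝ × ℝ × ℝ) :
    fderiv ℝ etaCoord p v = -v.1 * sin p.2.2 + v.2.1 * cos p.2.2 - xiCoord p * v.2.2 := by
  have h : HasFDerivAt etaCoord _ p :=
    (hasFDerivAt_fst.fun_neg.fun_mul hasFDerivAt_snd.snd.sin).fun_add
      (hasFDerivAt_snd.fst.fun_mul hasFDerivAt_snd.snd.cos)
  rw [h.fderiv]
  simp only [add_apply, neg_apply, smul_apply, ContinuousLinearMap.comp_apply,
    ContinuousLinearMap.coe_fst', ContinuousLinearMap.coe_snd', smul_eq_mul, xiCoord]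
  ring

end MovingFrame

lemma integral_gaussian_prod_three (a b c : ℝ) :
    ∫ p : ℝ × ℝ × ℝ, exp (-a * p.1 ^ 2) * (exp (-b * p.2.1 ^ 2) * exp (-c * p.2.2 ^ 2)) =
      √(π / a) * (√(π / b) * √(π / c)) := by
  rw [Measure.volume_eq_prod, integral_prod_mul (fun x : ℝ => exp (-a * x ^ 2))
      (fun q : ℝ × ℝ => exp (-b * q.1 ^ 2) * exp (-c * q.2 ^ 2)),
    Measure.volume_eq_prod, integral_prod_mul (fun x : ℝ => exp (-b * x ^ 2))
      (fun x : ℝ => exp (-c * x ^ 2)), integral_gaussian, integral_gaussian,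
    integral_gaussian]

lemma rpow_neg_three_halves {a : ℝ} (ha : 0 < a) : a ^ (-(3 : ℝ) / 2) = (a * √a)⁻¹ := by
  rw [show -(3 : ℝ) / 2 = -(1 + 1 / 2) by norm_num, rpow_neg ha.le, rpow_add ha, rpow_one,
    ← sqrt_eq_rpow]

section Kernel

variable (D11 D22 s : ℝ)

lemma differentiable_Kheat : Differentiable ℝ (Kheat D11 D22 s) := by
  unfold Kheat
  fun_prop

lemma fderiv_Kheat_apply (p v : ℝ × ℝ × ℝ) :
    fderiv ℝ (Kheat D11 D22 s) p v =
      -((p.1 * v.1 + p.2.1 * v.2.1) / (2 * D22 * s) + p.2.2 * v.2.2 / (2 * D11 * s)) *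
        Kheat D11 D22 s p := by
  have h : HasFDerivAt (Kheat D11 D22 s) _ p :=
    ((((hasFDerivAt_snd.snd.pow 2).mul_const D11⁻¹).fun_add
      (((hasFDerivAt_fst.pow 2).fun_add (hasFDerivAt_snd.fst.pow 2)).mul_const D22⁻¹)).fun_neg
        |>.mul_const (4 * s)⁻¹).exp.const_mul _
  rw [h.fderiv]
  simp only [add_apply, neg_apply, smul_apply, ContinuousLinearMap.comp_apply,
    ContinuousLinearMap.coe_fst', ContinuousLinearMap.coe_snd', smul_eq_mul, Kheat,
    div_eq_mul_inv]
  ring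

lemma Atheta_Kheat :
    Atheta (Kheat D11 D22 s) = fun p => -(p.2.2 / (2 * D11 * s)) * Kheat D11 D22 s p := by
  ext p
  rw [Atheta, fderiv_Kheat_apply]
  ring

lemma Axi_Kheat :
    Axi (Kheat D11 D22 s) = fun p => -(xiCoord p / (2 * D22 * s)) * Kheat D11 D22 s p := by
  ext p
  rw [Axi, fderiv_Kheat_apply, xiCoord]
  ring

lemma Aeta_Kheat :
    Aeta (Kheat D11 D22 s) = fun p => -(etaCoord p / (2 * D22 * s)) * Kheat D11 D22 s p := by
  ext p
  rw [Aeta, fderiv_Kheat_apply, etaCoord]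
  ring

lemma Atheta_Atheta_Kheat (p : ℝ × ℝ × ℝ) :
    Atheta (Atheta (Kheat D11 D22 s)) p =
      ((p.2.2 / (2 * D11 * s)) ^ 2 - 1 / (2 * D11 * s)) * Kheat D11 D22 s p := by
  have hg : HasFDerivAt (fun q : ℝ × ℝ × ℝ => -(q.2.2 / (2 * D11 * s))) _ p :=
    ((hasFDerivAt_snd (𝕜 := ℝ) (p := p)).snd.mul_const (2 * D11 * s)⁻¹).fun_neg
  rw [Atheta_eq_fieldDeriv, fieldDeriv_fieldDeriv_of_eq_mul (Atheta_Kheat D11 D22 s)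
    hg.differentiableAt (differentiable_Kheat D11 D22 s p), fieldDeriv, hg.fderiv]
  simp only [neg_apply, smul_apply, ContinuousLinearMap.comp_apply, ContinuousLinearMap.coe_snd',
    smul_eq_mul, mul_one]
  ring

lemma Axi_Axi_Kheat (p : ℝ × ℝ × ℝ) :
    Axi (Axi (Kheat D11 D22 s)) p =
      ((xiCoord p / (2 * D22 * s)) ^ 2 - 1 / (2 * D22 * s)) * Kheat D11 D22 s p := by
  have hg : HasFDerivAt (fun q => -(xiCoord q / (2 * D22 * s))) _ p :=
    ((differentiable_xiCoord p).hasFDerivAt.mul_const (2 * D22 * s)⁻¹).fun_neg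
  rw [Axi_eq_fieldDeriv, fieldDeriv_fieldDeriv_of_eq_mul (Axi_Kheat D11 D22 s)
    hg.differentiableAt (differentiable_Kheat D11 D22 s p), fieldDeriv, hg.fderiv]
  simp only [neg_apply, smul_apply, fderiv_xiCoord_apply, mul_zero, add_zero, smul_eq_mul]
  linear_combination -(Kheat D11 D22 s p / (2 * D22 * s)) * sin_sq_add_cos_sq p.2.2

lemma Aeta_Aeta_Kheat (p : ℝ × ℝ × ℝ) :
    Aeta (Aeta (Kheat D11 D22 s)) p =
      ((etaCoord p / (2 * D22 * s)) ^ 2 - 1 / (2 * D22 * s)) * Kheat D11 D22 s p := by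
  have hg : HasFDerivAt (fun q => -(etaCoord q / (2 * D22 * s))) _ p :=
    ((differentiable_etaCoord p).hasFDerivAt.mul_const (2 * D22 * s)⁻¹).fun_neg
  rw [Aeta_eq_fieldDeriv, fieldDeriv_fieldDeriv_of_eq_mul (Aeta_Kheat D11 D22 s)
    hg.differentiableAt (differentiable_Kheat D11 D22 s p), fieldDeriv, hg.fderiv]
  simp only [neg_apply, smul_apply, fderiv_etaCoord_apply, mul_zero, sub_zero, smul_eq_mul]
  linear_combination -(Kheat D11 D22 s p / (2 * D22 * s)) * sin_sq_add_cos_sq p.2.2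

lemma hasDerivAt_Kheat_time (hs : s ≠ 0) (p : ℝ × ℝ × ℝ) :
    HasDerivAt (fun t => Kheat D11 D22 t p)
      (((p.2.2 ^ 2 / D11 + (p.1 ^ 2 + p.2.1 ^ 2) / D22) / (4 * s ^ 2) - 3 / (2 * s)) *
        Kheat D11 D22 s p) s := by
  have h4πs : 4 * π * s ≠ 0 := by positivity
  have h : HasDerivAt (fun t => Kheat D11 D22 t p) _ s :=
    ((((hasDerivAt_id' s).const_mul (4 * π)).rpow_const (Or.inl h4πs)).const_mul _).mul
      ((((hasDerivAt_id' s).const_mul 4).inv (by positivity)).const_mul _).exp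
  convert h using 1
  rw [Kheat, rpow_sub_one h4πs, Pi.inv_apply]
  field_simp
  ring

lemma hasDerivAt_Kheat_time_eq_diffusion (h11 : D11 ≠ 0) (h22 : D22 ≠ 0) (hs : s ≠ 0)
    (p : ℝ × ℝ × ℝ) :
    HasDerivAt (fun t => Kheat D11 D22 t p)
      (D11 * Atheta (Atheta (Kheat D11 D22 s)) p
        + D22 * (Axi (Axi (Kheat D11 D22 s)) p + Aeta (Aeta (Kheat D11 D22 s)) p)) s := by
  convert hasDerivAt_Kheat_time D11 D22 s hs p using 1
  rw [Atheta_Atheta_Kheat, Axi_Axi_Kheat, Aeta_Aeta_Kheat, ← xiCoord_sq_add_etaCoord_sq]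
  field_simp
  ring

lemma Kheat_eq_mul_gaussian (p : ℝ × ℝ × ℝ) :
    Kheat D11 D22 s p = 1 / (D22 * √D11) * (4 * π * s) ^ (-(3 : ℝ) / 2) *
      (exp (-(4 * s * D22)⁻¹ * p.1 ^ 2) *
        (exp (-(4 * s * D22)⁻¹ * p.2.1 ^ 2) * exp (-(4 * s * D11)⁻¹ * p.2.2 ^ 2))) := by
  rw [Kheat, ← exp_add, ← exp_add]
  ring_nf

lemma integral_Kheat (h11 : 0 < D11) (h22 : 0 < D22) (hs : 0 < s) :
    ∫ p, Kheat D11 D22 s p = 1 := by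
  have h4πs : 0 < 4 * π * s := by positivity
  simp_rw [Kheat_eq_mul_gaussian]
  rw [integral_const_mul, integral_gaussian_prod_three, div_inv_eq_mul, div_inv_eq_mul,
    rpow_neg_three_halves h4πs, ← mul_assoc √_, mul_self_sqrt (by positivity),
    show π * (4 * s * D11) = 4 * π * s * D11 by ring, sqrt_mul h4πs.le]
  field_simp

lemma contDiffOn_Kheat :
    ContDiffOn ℝ ∞ (fun q : (ℝ × ℝ × ℝ) × ℝ => Kheat D11 D22 q.2 q.1)
      (Set.univ ×ˢ Set.Ioi 0) := by
  rintro q ⟨-, hs : 0 < q.2⟩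
  refine ContDiffAt.contDiffWithinAt ?_
  unfold Kheat
  fun_prop (disch := positivity)

end Kernel

theorem stmt_8 (D11 D22 : ℝ) (h11 : 0 < D11) (h22 : 0 < D22) :
    ContDiffOn ℝ ∞ (fun q : (ℝ × ℝ × ℝ) × ℝ => Kheat D11 D22 q.2 q.1)
      (Set.univ ×ˢ Set.Ioi (0 : ℝ)) ∧
    (∀ s : ℝ, 0 < s → ∀ p : ℝ × ℝ × ℝ,
      HasDerivAt (fun t => Kheat D11 D22 t p)
        (D11 * Atheta (Atheta (Kheat D11 D22 s)) p
          + D22 * (Axi (Axi (Kheat D11 D22 s)) p + Aeta (Aeta (Kheat D11 D22 s)) p)) s) ∧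
    (∀ s : ℝ, 0 < s → ∫ p : ℝ × ℝ × ℝ, Kheat D11 D22 s p = 1) :=
  ⟨contDiffOn_Kheat D11 D22,
    fun s hs => hasDerivAt_Kheat_time_eq_diffusion D11 D22 s h11.ne' h22.ne' hs.ne',
    fun s hs => integral_Kheat D11 D22 s h11 h22 hs⟩
end

section
/- Let α, D₁₁, D₂₂ > 0. For (x, y, θ) ∈ ℝ³ with (x, y, θ) ≠ (0, 0, 0), set ρ = √(θ²/D₁₁ + (x² + y²)/D₂₂). Then the resolvent kernel of the contour-enhancement process with D₂₂ = D₃₃ has the closed form α ∫₀^∞ K_s(x, y, θ) e^{−αs} ds = (α/(4π · D₂₂ · √D₁₁)) · e^{−√α · ρ}/ρ, and this function R satisfies the resolvent equation (α − D₁₁ ∂²/∂θ² − D₂₂(∂²/∂x² + ∂²/∂y²)) R = 0 at every point (x, y, θ) ≠ (0, 0, 0). -/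
/-!
STATEMENT 9: For α, D₁₁, D₂₂ > 0 and (x,y,θ) ≠ (0,0,0), with
ρ = √(θ²/D₁₁ + (x²+y²)/D₂₂), the resolvent kernel of the contour-enhancement process
(case D₂₂ = D₃₃) has the closed form
α ∫₀^∞ K_s(x,y,θ) e^{−αs} ds = (α/(4π D₂₂ √D₁₁)) e^{−√α ρ}/ρ,
and this function R satisfies (α − D₁₁ ∂²/∂θ² − D₂₂(∂²/∂x² + ∂²/∂y²)) R = 0 away
from the origin.  Points are written p = (x, y, θ) : ℝ × ℝ × ℝ.
-/

open Real MeasureTheory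

/-- `ρ(x,y,θ) = √(θ²/D₁₁ + (x²+y²)/D₂₂)`. -/
noncomputable def rho (D11 D22 : ℝ) (p : ℝ × ℝ × ℝ) : ℝ :=
  Real.sqrt (p.2.2 ^ 2 / D11 + (p.1 ^ 2 + p.2.1 ^ 2) / D22)

/-- The closed-form resolvent kernel `(α/(4π D₂₂ √D₁₁)) e^{−√α ρ}/ρ`. -/
noncomputable def Rres (α D11 D22 : ℝ) (p : ℝ × ℝ × ℝ) : ℝ :=
  α / (4 * π * D22 * Real.sqrt D11) * Real.exp (-Real.sqrt α * rho D11 D22 p)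
    / rho D11 D22 p

/-!
Substituting `s = u ^ (-2)` turns the Laplace transform of the heat kernel into a multiple of
`∫₀^∞ exp (-(b²u² + a²/u²)) du`, which after completing the square is `e^{-2ab}` times
`∫₀^∞ exp (-(bu - a/u)²) du`. The substitution `v = bu - a/u`, combined with the symmetry
`u ↦ a/(bu)` that changes the sign of `v`, evaluates the latter as `√π / (2b)`
(Cauchy–Schlömilch).

The closed form is `C · Y(ρ²)`, where `Y(t) = e^{-√α √t} / √t` is the Yukawa potential written in
`t = r²`. Since `ρ²` is a quadratic form, the chain rule reduces the anisotropic operator applied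
to `Y(ρ²)` to `4 t Y'' + 6 Y'`, the radial part of the Laplacian in `ℝ³`, and this equals `α Y`.
-/

open Set Filter Topology

section CauchySchlomilch

variable {E : Type*} [NormedAddCommGroup E] [NormedSpace ℝ E] {a b : ℝ}

lemma hasDerivAt_mul_sub_div {u : ℝ} (hu : u ≠ 0) :
    HasDerivAt (fun u => b * u - a / u) (b + a / u ^ 2) u := by
  have h : HasDerivAt (fun u => b * u - a * u⁻¹) (b * 1 - a * -(u ^ 2)⁻¹) u :=
    ((hasDerivAt_id' u).const_mul b).sub ((hasDerivAt_inv hu).const_mul a)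
  simpa only [mul_one, mul_neg, sub_neg_eq_add, ← div_eq_mul_inv] using h

lemma strictMonoOn_mul_sub_div (ha : 0 < a) (hb : 0 < b) :
    StrictMonoOn (fun u => b * u - a / u) (Ioi 0) := by
  intro x hx y _ hxy
  have : a / y < a / x := div_lt_div_of_pos_left ha hx hxy
  dsimp only
  nlinarith

lemma image_Ioi_mul_sub_div (ha : 0 < a) (hb : 0 < b) :
    (fun u => b * u - a / u) '' Ioi 0 = univ := by
  refine eq_univ_of_forall fun v => ?_
  -- the positive root of `b u² - v u - a = 0`
  set w := √(v ^ 2 + 4 * a * b)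
  have hw : w ^ 2 = v ^ 2 + 4 * a * b := sq_sqrt (by positivity)
  have hvw : 0 < v + w := by
    have : |v| < w := by
      rw [← sqrt_sq_eq_abs]
      exact sqrt_lt_sqrt (sq_nonneg _) (by nlinarith [mul_pos ha hb])
    linarith [neg_le_abs v]
  refine ⟨(v + w) / (2 * b), div_pos hvw (by positivity), ?_⟩
  field_simp
  nlinarith

lemma integral_Ioi_smul_comp_mul_sub_div (ha : 0 < a) (hb : 0 < b) (f : ℝ → E) :
    ∫ u in Ioi 0, (b + a / u ^ 2) • f (b * u - a / u) = ∫ v, f v := by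
  have h := integral_image_eq_integral_abs_deriv_smul measurableSet_Ioi
    (fun u hu => (hasDerivAt_mul_sub_div (a := a) (b := b) (ne_of_gt hu)).hasDerivWithinAt)
    (strictMonoOn_mul_sub_div ha hb).injOn f
  rw [image_Ioi_mul_sub_div ha hb, Measure.restrict_univ] at h
  rw [h]
  refine setIntegral_congr_fun measurableSet_Ioi fun u (hu : 0 < u) => ?_
  rw [abs_of_pos (by positivity)]

lemma integrableOn_Ioi_smul_comp_mul_sub_div_iff (ha : 0 < a) (hb : 0 < b) (f : ℝ → E) :
    IntegrableOn (fun u => (b + a / u ^ 2) • f (b * u - a / u)) (Ioi 0) ↔ Integrable f := by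
  have h := integrableOn_image_iff_integrableOn_abs_deriv_smul measurableSet_Ioi
    (fun u hu => (hasDerivAt_mul_sub_div (a := a) (b := b) (ne_of_gt hu)).hasDerivWithinAt)
    (strictMonoOn_mul_sub_div ha hb).injOn f
  rw [image_Ioi_mul_sub_div ha hb, integrableOn_univ] at h
  rw [h]
  refine integrableOn_congr_fun (fun u (hu : 0 < u) => ?_) measurableSet_Ioi
  rw [abs_of_pos (by positivity)]

lemma image_Ioi_const_div {c : ℝ} (hc : 0 < c) : (fun u : ℝ => c / u) '' Ioi 0 = Ioi 0 := by
  ext v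
  refine ⟨?_, fun (hv : 0 < v) => ⟨c / v, div_pos hc hv, by field_simp⟩⟩
  rintro ⟨u, hu, rfl⟩
  exact div_pos hc hu

/-- The substitution `u ↦ a / (b u)` reverses the sign of `b u - a / u`. -/
lemma smul_integral_Ioi_comp_mul_sub_div (ha : 0 < a) (hb : 0 < b) {f : ℝ → E}
    (hf : Function.Even f) :
    b • ∫ u in Ioi 0, f (b * u - a / u) = ∫ u in Ioi 0, (a / u ^ 2) • f (b * u - a / u) := by
  have hc : 0 < a / b := div_pos ha hb
  have h := integral_image_eq_integral_abs_deriv_smul measurableSet_Ioi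
    (fun u (hu : 0 < u) => ((hasDerivAt_inv hu.ne').const_mul (a / b)).hasDerivWithinAt)
    (fun x (hx : 0 < x) y (hy : 0 < y) hxy => by simpa [hc.ne', inv_inj] using hxy)
    (fun u => f (b * u - a / u))
  simp only [← div_eq_mul_inv, image_Ioi_const_div hc] at h
  rw [h, ← integral_smul]
  refine setIntegral_congr_fun measurableSet_Ioi fun u (hu : 0 < u) => ?_
  have harg : b * (a / b / u) - a / (a / b / u) = -(b * u - a / u) := by
    field_simp; ring
  rw [harg, hf, smul_smul, abs_mul, abs_neg, abs_of_pos hc, abs_of_pos (by positivity)]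
  congr 1
  field_simp

theorem integral_Ioi_comp_mul_sub_div (ha : 0 < a) (hb : 0 < b) {f : ℝ → E}
    (hf : Function.Even f) (hfi : Integrable f) :
    ∫ u in Ioi 0, f (b * u - a / u) = (2 * b)⁻¹ • ∫ v, f v := by
  have hw : IntegrableOn (fun u => (b + a / u ^ 2) • f (b * u - a / u)) (Ioi 0) :=
    (integrableOn_Ioi_smul_comp_mul_sub_div_iff ha hb f).2 hfi
  have hg : IntegrableOn (fun u => f (b * u - a / u)) (Ioi 0) := by
    have hm : Measurable fun u : ℝ => u ^ 2 / (b * u ^ 2 + a) := by fun_prop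
    refine IntegrableOn.congr_fun
      (hw.bdd_smul b⁻¹ hm.aestronglyMeasurable (ae_of_all _ fun u => ?bound))
      (fun u (hu : 0 < u) => ?_) measurableSet_Ioi
    case bound =>
      have hd : 0 < b * u ^ 2 + a := by positivity
      rw [norm_of_nonneg (by positivity), div_le_iff₀ hd]
      field_simp
      linarith
    rw [Pi.smul_apply', smul_smul,
      show u ^ 2 / (b * u ^ 2 + a) * (b + a / u ^ 2) = 1 by field_simp, one_smul]
  have hag : IntegrableOn (fun u => (a / u ^ 2) • f (b * u - a / u)) (Ioi 0) :=
    (hw.sub (hg.smul b)).congr_fun (fun u _ => by simp [add_smul]) measurableSet_Ioi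
  have h2 : (2 * b) • ∫ u in Ioi 0, f (b * u - a / u) = ∫ v, f v := by
    rw [two_mul, add_smul]
    nth_rw 2 [smul_integral_Ioi_comp_mul_sub_div ha hb hf]
    rw [← integral_smul, ← integral_add (f := fun u => b • f (b * u - a / u)) (hg.smul b) hag,
      ← integral_Ioi_smul_comp_mul_sub_div ha hb f]
    simp_rw [add_smul]
  rw [← h2, smul_smul, inv_mul_cancel₀ (by positivity), one_smul]

end CauchySchlomilch

section Laplace

variable {a b : ℝ}

lemma integral_Ioi_exp_neg_sq_mul_sub_div (ha : 0 < a) (hb : 0 < b) :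
    ∫ u in Ioi 0, exp (-(b * u - a / u) ^ 2) = √π / (2 * b) := by
  have hf : Function.Even fun v : ℝ => exp (-v ^ 2) := fun v => by simp only [neg_sq]
  have hfi : Integrable fun v : ℝ => exp (-v ^ 2) := by
    simpa using integrable_exp_neg_mul_sq one_pos
  have hgauss : ∫ v : ℝ, exp (-v ^ 2) = √π := by simpa using integral_gaussian 1
  rw [integral_Ioi_comp_mul_sub_div (f := fun v => exp (-v ^ 2)) ha hb hf hfi, hgauss,
    smul_eq_mul, inv_mul_eq_div]

lemma integral_Ioi_exp_neg_mul_sq_add_div_sq (ha : 0 < a) (hb : 0 < b) :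
    ∫ u in Ioi 0, exp (-(b ^ 2 * u ^ 2 + a ^ 2 / u ^ 2))
      = √π / (2 * b) * exp (-(2 * a * b)) := by
  have h : ∀ u ∈ Ioi (0 : ℝ), exp (-(b ^ 2 * u ^ 2 + a ^ 2 / u ^ 2))
      = exp (-(2 * a * b)) * exp (-(b * u - a / u) ^ 2) := by
    intro u (hu : 0 < u)
    rw [← exp_add]
    congr 1
    field_simp
    ring
  rw [setIntegral_congr_fun measurableSet_Ioi h, integral_const_mul,
    integral_Ioi_exp_neg_sq_mul_sub_div ha hb, mul_comm]

/-- The Laplace transform of the Lévy density `s ^ (-3/2) e^{-a²/s}`. -/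
theorem integral_Ioi_rpow_mul_exp_neg_div_add_mul (ha : 0 < a) (hb : 0 < b) :
    ∫ s in Ioi 0, s ^ (-(3 : ℝ) / 2) * exp (-(a ^ 2 / s + b ^ 2 * s))
      = √π / a * exp (-(2 * a * b)) := by
  rw [← integral_comp_rpow_Ioi _ (show (-2 : ℝ) ≠ 0 by norm_num)]
  have h : ∀ x ∈ Ioi (0 : ℝ),
      (|(-2 : ℝ)| * x ^ ((-2 : ℝ) - 1)) • ((x ^ (-2 : ℝ)) ^ (-(3 : ℝ) / 2) *
        exp (-(a ^ 2 / x ^ (-2 : ℝ) + b ^ 2 * x ^ (-2 : ℝ))))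
      = 2 * exp (-(a ^ 2 * x ^ 2 + b ^ 2 / x ^ 2)) := by
    intro x (hx : 0 < x)
    have hpow : (x ^ (-2 : ℝ)) ^ (-(3 : ℝ) / 2) = x ^ (3 : ℝ) := by
      rw [← rpow_mul hx.le]; norm_num
    have hinv : x ^ (-2 : ℝ) = (x ^ 2)⁻¹ := by rw [rpow_neg hx.le, rpow_two]
    have hcancel : x ^ ((-2 : ℝ) - 1) * x ^ (3 : ℝ) = 1 := by
      rw [← rpow_add hx]; norm_num
    rw [hpow, smul_eq_mul, mul_assoc, ← mul_assoc (x ^ _), hcancel, hinv]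
    norm_num
    field_simp
  rw [setIntegral_congr_fun measurableSet_Ioi h, integral_const_mul,
    integral_Ioi_exp_neg_mul_sq_add_div_sq hb ha]
  field_simp

end Laplace

lemma fderiv_fderiv_comp_apply {E : Type*} [NormedAddCommGroup E] [NormedSpace ℝ E]
    {F F' : ℝ → ℝ} {F'' : ℝ} {u : E → ℝ} {u' : E → E →L[ℝ] ℝ} {u'' : E →L[ℝ] ℝ} {p v : E}
    (hF : ∀ᶠ q in 𝓝 p, HasDerivAt F (F' (u q)) (u q)) (hF' : HasDerivAt F' F'' (u p))
    (hu : ∀ᶠ q in 𝓝 p, HasFDerivAt u (u' q) q) (hu' : HasFDerivAt (fun q => u' q v) u'' p) :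
    fderiv ℝ (fun q => fderiv ℝ (fun q => F (u q)) q v) p v
      = F'' * u' p v ^ 2 + F' (u p) * u'' v := by
  have hfirst : (fun q => fderiv ℝ (fun q => F (u q)) q v) =ᶠ[𝓝 p] fun q => F' (u q) * u' q v := by
    filter_upwards [hF, hu] with q hFq huq
    rw [HasFDerivAt.fderiv (f := fun q => F (u q)) (hFq.comp_hasFDerivAt q huq),
      smul_apply, smul_eq_mul]
  have hsecond : HasFDerivAt (fun q => F' (u q) * u' q v)
      (F' (u p) • u'' + u' p v • F'' • u' p) p :=
    (hF'.comp_hasFDerivAt p hu.self_of_nhds).mul hu'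
  rw [hfirst.fderiv_eq, hsecond.fderiv]
  simp only [add_apply, smul_apply, smul_eq_mul]
  ring

noncomputable def yukawa (k t : ℝ) : ℝ := exp (-k * √t) / √t

noncomputable def yukawaDeriv (k t : ℝ) : ℝ := -(exp (-k * √t) * (k * √t + 1) / (2 * t * √t))

noncomputable def yukawaDeriv2 (k t : ℝ) : ℝ :=
  exp (-k * √t) * (k ^ 2 * t + 3 * k * √t + 3) / (4 * t ^ 2 * √t)

section Yukawa

variable {k t : ℝ}

lemma hasDerivAt_yukawa (ht : 0 < t) : HasDerivAt (yukawa k) (yukawaDeriv k t) t := by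
  have hs : 0 < √t := sqrt_pos.mpr ht
  have h := ((hasDerivAt_sqrt ht.ne').const_mul (-k)).exp.div (hasDerivAt_sqrt ht.ne') hs.ne'
  refine h.congr_deriv ?_
  obtain ⟨r, hr, rfl⟩ : ∃ r > 0, t = r ^ 2 := ⟨√t, hs, (sq_sqrt ht.le).symm⟩
  rw [yukawaDeriv, sqrt_sq hr.le]
  field_simp
  ring

lemma hasDerivAt_yukawaDeriv (ht : 0 < t) : HasDerivAt (yukawaDeriv k) (yukawaDeriv2 k t) t := by
  have hs : 0 < √t := sqrt_pos.mpr ht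
  have hsqrt := hasDerivAt_sqrt ht.ne'
  have hnum := (hsqrt.const_mul (-k)).exp.mul ((hsqrt.const_mul k).add_const 1)
  have hden := ((hasDerivAt_id' t).const_mul 2).mul hsqrt
  have h := (hnum.div hden (by simp only [Pi.mul_apply]; positivity)).neg
  refine h.congr_deriv ?_
  obtain ⟨r, hr, rfl⟩ : ∃ r > 0, t = r ^ 2 := ⟨√t, hs, (sq_sqrt ht.le).symm⟩
  simp only [Pi.mul_apply, yukawaDeriv2, sqrt_sq hr.le]
  field_simp
  ring

/-- With `t = r²`, this is the radial form `(Δ - k²) (e^{-k r} / r) = 0` of the Helmholtz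
equation in `ℝ³`. -/
lemma yukawa_ode (ht : 0 < t) :
    4 * t * yukawaDeriv2 k t + 6 * yukawaDeriv k t = k ^ 2 * yukawa k t := by
  have hs : 0 < √t := sqrt_pos.mpr ht
  obtain ⟨r, hr, rfl⟩ : ∃ r > 0, t = r ^ 2 := ⟨√t, hs, (sq_sqrt ht.le).symm⟩
  rw [yukawa, yukawaDeriv, yukawaDeriv2, sqrt_sq hr.le]
  field_simp
  ring

end Yukawa

noncomputable def rhoSq (D11 D22 : ℝ) (q : ℝ × ℝ × ℝ) : ℝ :=
  q.2.2 ^ 2 / D11 + (q.1 ^ 2 + q.2.1 ^ 2) / D22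

noncomputable def rhoSqDeriv (D11 D22 : ℝ) (q : ℝ × ℝ × ℝ) : ℝ × ℝ × ℝ →L[ℝ] ℝ :=
  (2 * q.2.2 / D11) • (ContinuousLinearMap.snd ℝ ℝ ℝ).comp (ContinuousLinearMap.snd ℝ ℝ (ℝ × ℝ))
    + (2 * q.1 / D22) • ContinuousLinearMap.fst ℝ ℝ (ℝ × ℝ)
    + (2 * q.2.1 / D22) •
      (ContinuousLinearMap.fst ℝ ℝ ℝ).comp (ContinuousLinearMap.snd ℝ ℝ (ℝ × ℝ))

section Resolvent

variable {α D11 D22 : ℝ}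

lemma rhoSqDeriv_apply (q v : ℝ × ℝ × ℝ) :
    rhoSqDeriv D11 D22 q v
      = 2 * q.2.2 / D11 * v.2.2 + 2 * q.1 / D22 * v.1 + 2 * q.2.1 / D22 * v.2.1 :=
  rfl

lemma hasFDerivAt_rhoSq (q : ℝ × ℝ × ℝ) :
    HasFDerivAt (rhoSq D11 D22) (rhoSqDeriv D11 D22 q) q := by
  have hx : HasFDerivAt (fun q : ℝ × ℝ × ℝ => q.1) _ q := hasFDerivAt_fst (𝕜 := ℝ)
  have hy : HasFDerivAt (fun q : ℝ × ℝ × ℝ => q.2.1) _ q := (hasFDerivAt_snd (𝕜 := ℝ)).fst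
  have hθ : HasFDerivAt (fun q : ℝ × ℝ × ℝ => q.2.2) _ q := (hasFDerivAt_snd (𝕜 := ℝ)).snd
  have h := ((hθ.mul hθ).mul_const D11⁻¹).add (((hx.mul hx).add (hy.mul hy)).mul_const D22⁻¹)
  have hfun : rhoSq D11 D22
      = fun q => q.2.2 * q.2.2 * D11⁻¹ + (q.1 * q.1 + q.2.1 * q.2.1) * D22⁻¹ := by
    funext q
    simp only [rhoSq]
    ring
  rw [hfun]
  exact h.congr_fderiv (by ext <;> simp [rhoSqDeriv] <;> ring)

lemma hasFDerivAt_rhoSqDeriv_apply (p v : ℝ × ℝ × ℝ) :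
    HasFDerivAt (fun q => rhoSqDeriv D11 D22 q v) (rhoSqDeriv D11 D22 v) p := by
  have hsymm : (fun q => rhoSqDeriv D11 D22 q v) = rhoSqDeriv D11 D22 v := by
    funext q; simp only [rhoSqDeriv_apply]; ring
  rw [hsymm]
  exact (rhoSqDeriv D11 D22 v).hasFDerivAt

lemma rhoSq_pos (h11 : 0 < D11) (h22 : 0 < D22) {q : ℝ × ℝ × ℝ} (hq : q ≠ 0) :
    0 < rhoSq D11 D22 q := by
  obtain ⟨x, y, θ⟩ := q
  have : x ≠ 0 ∨ y ≠ 0 ∨ θ ≠ 0 := by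
    by_contra! h
    simp_all
  unfold rhoSq
  dsimp only
  rcases this with h | h | h <;> positivity

lemma Rres_eq_mul_yukawa (α D11 D22 : ℝ) :
    Rres α D11 D22 = fun q => α / (4 * π * D22 * √D11) * yukawa (√α) (rhoSq D11 D22 q) := by
  funext q
  rw [Rres, yukawa, mul_div_assoc]
  rfl

lemma fderiv_fderiv_Rres_apply (h11 : 0 < D11) (h22 : 0 < D22) {p : ℝ × ℝ × ℝ} (hp : p ≠ 0)
    (v : ℝ × ℝ × ℝ) :
    fderiv ℝ (fun q => fderiv ℝ (Rres α D11 D22) q v) p v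
      = α / (4 * π * D22 * √D11) *
        (yukawaDeriv2 (√α) (rhoSq D11 D22 p) * rhoSqDeriv D11 D22 p v ^ 2
          + yukawaDeriv (√α) (rhoSq D11 D22 p) * rhoSqDeriv D11 D22 v v) := by
  rw [Rres_eq_mul_yukawa, mul_add, ← mul_assoc, ← mul_assoc]
  set C := α / (4 * π * D22 * √D11)
  refine fderiv_fderiv_comp_apply (F := fun t => C * yukawa (√α) t)
    (F' := fun t => C * yukawaDeriv (√α) t) ?_
    ((hasDerivAt_yukawaDeriv (rhoSq_pos h11 h22 hp)).const_mul C)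
    (Eventually.of_forall hasFDerivAt_rhoSq) (hasFDerivAt_rhoSqDeriv_apply p v)
  filter_upwards [eventually_ne_nhds hp] with q hq
  exact (hasDerivAt_yukawa (rhoSq_pos h11 h22 hq)).const_mul C

theorem Rres_resolvent_equation (hα : 0 ≤ α) (h11 : 0 < D11) (h22 : 0 < D22)
    {p : ℝ × ℝ × ℝ} (hp : p ≠ 0) :
    α * Rres α D11 D22 p
        - D11 * fderiv ℝ (fun q => fderiv ℝ (Rres α D11 D22) q (0, 0, 1)) p (0, 0, 1)
        - D22 * (fderiv ℝ (fun q => fderiv ℝ (Rres α D11 D22) q (1, 0, 0)) p (1, 0, 0)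
            + fderiv ℝ (fun q => fderiv ℝ (Rres α D11 D22) q (0, 1, 0)) p (0, 1, 0)) = 0 := by
  have hode := yukawa_ode (k := √α) (rhoSq_pos h11 h22 hp)
  rw [sq_sqrt hα] at hode
  rw [fderiv_fderiv_Rres_apply h11 h22 hp, fderiv_fderiv_Rres_apply h11 h22 hp,
    fderiv_fderiv_Rres_apply h11 h22 hp, Rres_eq_mul_yukawa]
  simp only [rhoSqDeriv_apply, mul_zero, mul_one, add_zero, zero_add, zero_div]
  linear_combination (norm := skip) (-(α / (4 * π * D22 * √D11))) * hode
  unfold rhoSq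
  field_simp
  ring

theorem integral_Kheat_mul_exp_eq_Rres (hα : 0 < α) (h11 : 0 < D11) (h22 : 0 < D22)
    {p : ℝ × ℝ × ℝ} (hp : p ≠ 0) :
    α * ∫ s in Ioi 0, Kheat D11 D22 s p * exp (-(α * s)) = Rres α D11 D22 p := by
  have hρsq : rho D11 D22 p ^ 2 = rhoSq D11 D22 p := sq_sqrt (rhoSq_pos h11 h22 hp).le
  have hρ : 0 < rho D11 D22 p := sqrt_pos.2 (rhoSq_pos h11 h22 hp)
  rw [Rres]
  set ρ := rho D11 D22 p
  have hK : ∀ s ∈ Ioi (0 : ℝ), Kheat D11 D22 s p * exp (-(α * s))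
      = 1 / (D22 * √D11) * (4 * π) ^ (-(3 : ℝ) / 2)
        * (s ^ (-(3 : ℝ) / 2) * exp (-((ρ / 2) ^ 2 / s + √α ^ 2 * s))) := by
    intro s (hs : 0 < s)
    have hexp : exp (-(p.2.2 ^ 2 / D11 + (p.1 ^ 2 + p.2.1 ^ 2) / D22) / (4 * s))
        * exp (-(α * s)) = exp (-((ρ / 2) ^ 2 / s + √α ^ 2 * s)) := by
      rw [← exp_add, div_pow, hρsq, sq_sqrt hα.le, rhoSq]
      congr 1
      field_simp
      ring
    rw [Kheat, mul_rpow (by positivity) hs.le, mul_assoc, hexp]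
    ring
  have h4π : (4 * π) ^ (-(3 : ℝ) / 2) = (8 * π * √π)⁻¹ := by
    rw [rpow_div_two_eq_sqrt _ (by positivity), sqrt_mul (by norm_num),
      show √(4 : ℝ) = 2 by rw [show (4 : ℝ) = 2 ^ 2 by norm_num, sqrt_sq (by norm_num)],
      rpow_neg (by positivity), show (3 : ℝ) = (3 : ℕ) by norm_num, rpow_natCast, mul_pow,
      pow_succ √π 2, sq_sqrt pi_pos.le]
    ring
  rw [setIntegral_congr_fun measurableSet_Ioi hK, integral_const_mul,
    integral_Ioi_rpow_mul_exp_neg_div_add_mul (half_pos hρ) (sqrt_pos.2 hα), h4π,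
    show 2 * (ρ / 2) * √α = √α * ρ by ring]
  field_simp
  norm_num

end Resolvent

theorem stmt_9 (α D11 D22 : ℝ) (hα : 0 < α) (h11 : 0 < D11) (h22 : 0 < D22)
    (p : ℝ × ℝ × ℝ) (hp : p ≠ 0) :
    (α * ∫ s in Set.Ioi (0 : ℝ), Kheat D11 D22 s p * Real.exp (-(α * s)))
        = Rres α D11 D22 p ∧
    α * Rres α D11 D22 p
        - D11 * fderiv ℝ (fun q => fderiv ℝ (Rres α D11 D22) q (0, 0, 1)) p (0, 0, 1)
        - D22 * (fderiv ℝ (fun q => fderiv ℝ (Rres α D11 D22) q (1, 0, 0)) p (1, 0, 0)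
            + fderiv ℝ (fun q => fderiv ℝ (Rres α D11 D22) q (0, 1, 0)) p (0, 1, 0)) = 0 :=
  ⟨integral_Kheat_mul_exp_eq_Rres hα h11 h22 hp, Rres_resolvent_equation hα.le h11 h22 hp⟩
end

section
/- Let ε > 0, c > 0, let I ⊆ ℝ be an interval containing 0, and let z : I → (−1, 1) be twice continuously differentiable with z''(s) = ε·z(s) and (z'(s))² − ε·z(s)² = (c² − 1)·ε for all s ∈ I. Fix ỹ₀ ∈ ℝ and define x̃(s) = z(s)/(c·√ε) and ỹ(s) = ỹ₀ + (1/c)·∫₀^s √(1 − z(τ)²) dτ. Then the planar curve s ↦ (x̃(s), ỹ(s)) has unit speed, i.e. (x̃'(s))² + (ỹ'(s))² = 1 for all s ∈ I, and its signed curvature satisfies x̃'(s)·ỹ''(s) − ỹ'(s)·x̃''(s) = −√ε · z(s)/√(1 − z(s)²); in particular its squared curvature equals ε·z(s)²/(1 − z(s)²). -/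
/-!
Both identities are algebraic consequences of one reformulation of the conservation law,
`z'² + ε (1 - z²) = c² ε`. Since `x̃' = z' / (c √ε)` and `ỹ' = √(1 - z²) / c`, the squared
speed is `(z'² + ε (1 - z²)) / (c² ε) = 1`; and since `x̃'' = √ε z / c` (from `z'' = ε z`) and
`ỹ'' = -z z' / (c √(1 - z²))`, the signed curvature is
`-z (z'² + ε (1 - z²)) / (c² √ε √(1 - z²)) = -√ε z / √(1 - z²)`.
The only analytic input is the fundamental theorem of calculus for `ỹ` within the interval `I`.
-/

open Filter Set Topology

theorem Set.OrdConnected.ftcFilter_nhdsWithin {I : Set ℝ} (hI : I.OrdConnected) {b : ℝ}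
    (hb : b ∈ I) : intervalIntegral.FTCFilter b (𝓝[I] b) (𝓝[I] b) :=
  haveI : TendstoIxxClass Ioc (𝓟 I) (𝓟 I) :=
    tendstoIxxClass_of_subset fun _ _ => Ioc_subset_Icc_self
  haveI := hI.measurableSet.nhdsWithin_isMeasurablyGenerated b
  { toTendstoIxxClass := tendstoIxxClass_inf
    pure_le := pure_le_nhdsWithin hb
    le_nhds := inf_le_left }

theorem ContinuousOn.hasDerivWithinAt_integral_of_ordConnected {E : Type*} [NormedAddCommGroup E]
    [NormedSpace ℝ E] [CompleteSpace E] {f : ℝ → E} {I : Set ℝ} (hI : I.OrdConnected)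
    (hf : ContinuousOn f I) {a b : ℝ} (ha : a ∈ I) (hb : b ∈ I) :
    HasDerivWithinAt (fun u => ∫ x in a..u, f x) (f b) I b :=
  haveI := hI.ftcFilter_nhdsWithin hb
  intervalIntegral.integral_hasDerivWithinAt_right
    ((hf.mono (hI.uIcc_subset ha hb)).intervalIntegrable)
    (hf.stronglyMeasurableAtFilter_nhdsWithin hI.measurableSet b) (hf b hb)

theorem HasDerivWithinAt.sqrt_one_sub_sq {f : ℝ → ℝ} {f' x : ℝ} {s : Set ℝ}
    (hf : HasDerivWithinAt f f' s x) (hx : f x ^ 2 < 1) :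
    HasDerivWithinAt (fun t => √(1 - f t ^ 2)) (-(f x * f') / √(1 - f x ^ 2)) s x := by
  convert ((hf.fun_pow 2).const_sub 1).sqrt (sub_pos.2 hx).ne' using 1
  field_simp
  ring

section

variable {ε c z zd : ℝ}

theorem speed_sq_eq_one_of_conserved (hε : 0 < ε) (hc : c ≠ 0) (hz : z ^ 2 < 1)
    (h : zd ^ 2 + ε * (1 - z ^ 2) = c ^ 2 * ε) :
    (zd / (c * √ε)) ^ 2 + (1 / c * √(1 - z ^ 2)) ^ 2 = 1 := by
  rw [div_pow, mul_pow, mul_pow, Real.sq_sqrt hε.le, Real.sq_sqrt (sub_pos.2 hz).le]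
  field_simp
  linear_combination h

theorem signedCurvature_eq_of_conserved (hε : 0 < ε) (hc : c ≠ 0) (hz : z ^ 2 < 1)
    (h : zd ^ 2 + ε * (1 - z ^ 2) = c ^ 2 * ε) :
    zd / (c * √ε) * (-(z * zd) / (c * √(1 - z ^ 2))) - 1 / c * √(1 - z ^ 2) * (√ε * z / c)
      = -√ε * z / √(1 - z ^ 2) := by
  have hw : √(1 - z ^ 2) ^ 2 = 1 - z ^ 2 := Real.sq_sqrt (sub_pos.2 hz).le
  have ha : √ε ^ 2 = ε := Real.sq_sqrt hε.le
  have : 0 < √(1 - z ^ 2) := Real.sqrt_pos.2 (sub_pos.2 hz)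
  have : 0 < √ε := Real.sqrt_pos.2 hε
  field_simp
  rw [ha, hw]
  linear_combination (-z) * h

end

theorem stmt_17 (ε c : ℝ) (hε : 0 < ε) (hc : 0 < c)
    (I : Set ℝ) (hI : Convex ℝ I) (h0 : (0 : ℝ) ∈ I)
    (z zd zdd : ℝ → ℝ)
    (hrange : ∀ s ∈ I, z s ∈ Set.Ioo (-1 : ℝ) 1)
    (hz : ∀ s ∈ I, HasDerivWithinAt z (zd s) I s)
    (hzd : ∀ s ∈ I, HasDerivWithinAt zd (zdd s) I s)
    (hode : ∀ s ∈ I, zdd s = ε * z s)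
    (hconserved : ∀ s ∈ I, (zd s) ^ 2 - ε * (z s) ^ 2 = (c ^ 2 - 1) * ε)
    (y0 : ℝ) :
    -- x̃ and ỹ
    (let xt : ℝ → ℝ := fun t => z t / (c * Real.sqrt ε)
     let yt : ℝ → ℝ := fun t => y0 + (1 / c) * ∫ τ in (0 : ℝ)..t, Real.sqrt (1 - (z τ) ^ 2)
     -- their first and second derivatives
     let xd : ℝ → ℝ := fun s => zd s / (c * Real.sqrt ε)
     let yd : ℝ → ℝ := fun s => (1 / c) * Real.sqrt (1 - (z s) ^ 2)
     let xdd : ℝ → ℝ := fun s => Real.sqrt ε * z s / c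
     let ydd : ℝ → ℝ := fun s => -(z s * zd s) / (c * Real.sqrt (1 - (z s) ^ 2))
     ∀ s ∈ I,
       HasDerivWithinAt xt (xd s) I s ∧
       HasDerivWithinAt yt (yd s) I s ∧
       HasDerivWithinAt xd (xdd s) I s ∧
       HasDerivWithinAt yd (ydd s) I s ∧
       -- unit speed
       (xd s) ^ 2 + (yd s) ^ 2 = 1 ∧
       -- signed curvature
       xd s * ydd s - yd s * xdd s
         = -Real.sqrt ε * z s / Real.sqrt (1 - (z s) ^ 2) ∧
       -- squared curvature
       (xd s * ydd s - yd s * xdd s) ^ 2 = ε * (z s) ^ 2 / (1 - (z s) ^ 2)) := by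
  intro xt yt xd yd xdd ydd s hs
  have hz1 : ∀ t ∈ I, z t ^ 2 < 1 := fun t ht =>
    (sq_lt_one_iff_abs_lt_one _).2 (abs_lt.2 (hrange t ht))
  have hkey : ∀ t ∈ I, zd t ^ 2 + ε * (1 - z t ^ 2) = c ^ 2 * ε := fun t ht => by
    linear_combination hconserved t ht
  have hcurv : xd s * ydd s - yd s * xdd s = -√ε * z s / √(1 - z s ^ 2) :=
    signedCurvature_eq_of_conserved hε hc.ne' (hz1 s hs) (hkey s hs)
  have hzc : ContinuousOn z I := fun t ht => (hz t ht).continuousWithinAt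
  have hcont : ContinuousOn (fun τ => √(1 - z τ ^ 2)) I :=
    (continuousOn_const.sub (hzc.pow 2)).sqrt
  refine ⟨(hz s hs).div_const _, ?_, ?_, ?_,
    speed_sq_eq_one_of_conserved hε hc.ne' (hz1 s hs) (hkey s hs), hcurv, ?_⟩
  · exact ((hcont.hasDerivWithinAt_integral_of_ordConnected hI.ordConnected h0 hs).const_mul
      (1 / c)).const_add y0
  · refine ((hzd s hs).div_const (c * √ε)).congr_deriv ?_
    have : 0 < √ε := Real.sqrt_pos.2 hε
    show zdd s / (c * √ε) = √ε * z s / c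
    rw [hode s hs]
    field_simp
    rw [Real.sq_sqrt hε.le, mul_comm]
  · exact (((hz s hs).sqrt_one_sub_sq (hz1 s hs)).const_mul (1 / c)).congr_deriv (by ring)
  · rw [hcurv, div_pow, neg_mul, neg_sq, mul_pow, Real.sq_sqrt hε.le,
      Real.sq_sqrt (sub_pos.2 (hz1 s hs)).le]
end

section
/- Let x₁ > 0 and y₁, θ₀, θ₁, κ₀, κ₁ ∈ ℝ. Set c(x) = 20(x − x₁)(x − x₁/2)x and g(x) = (κ₁ − κ₀)·c(x)/x₁³. Then among all twice continuously differentiable functions y : [0, x₁] → ℝ with y(0) = 0, y'(0) = θ₀, y(x₁) = y₁, y'(x₁) = −θ₁, the functional E(y) = ∫₀^{x₁} (y''(x) − g(x))² dx attains its minimum uniquely at y*(x) = x·θ₀ + (x³/x₁³)(−2y₁ + x₁(θ₀ − θ₁)) + (x²/x₁²)(3y₁ + x₁(θ₁ − 2θ₀)) + ((κ₀ − κ₁)/x₁³)·(x − x₁)²·(x₁/2 − x)·x². Equivalently, y* is the unique function satisfying the boundary conditions together with the Euler–Lagrange equation y⁗(x) = (κ₁ − κ₀)·c''(x)/x₁³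 on (0, x₁). -/
/-!
The residual `y*'' - g` of the mode is affine. If `y` is admissible, `h = y - y*` vanishes
together with its slope at both ends, so `∫ (p x + q) h'' = [(p x + q) h' - p h] = 0`, and
expanding the square gives `E y = E y* + ∫ h''²`. Hence `y*` is a minimizer, and any other
minimizer has `h'' = 0`, so `h = 0` by the clamped boundary data. A solution of the
Euler–Lagrange equation has the same fourth derivative as `y*`, so again `h''` is affine and the
same identity forces `∫ h''² = 0`.
-/

open Set MeasureTheory intervalIntegral

theorem iteratedDerivWithin_two {𝕜 F : Type*} [NontriviallyNormedField 𝕜]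
    [NormedAddCommGroup F] [NormedSpace 𝕜 F] (f : 𝕜 → F) (s : Set 𝕜) :
    iteratedDerivWithin 2 f s = derivWithin (derivWithin f s) s := by
  rw [iteratedDerivWithin_succ', iteratedDerivWithin_one]

theorem iteratedDerivWithin_Icc_eq_Ioo {F : Type*} [NormedAddCommGroup F] [NormedSpace ℝ F]
    {a b x : ℝ} (n : ℕ) (f : ℝ → F) (hx : x ∈ Ioo a b) :
    iteratedDerivWithin n f (Icc a b) x = iteratedDerivWithin n f (Ioo a b) x := by
  have h : Icc a b =ᶠ[nhds x] Ioo a b := by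
    filter_upwards [Ioo_mem_nhds hx.1 hx.2] with y hy
    exact propext ⟨fun _ => hy, fun _ => Ioo_subset_Icc_self hy⟩
  simp only [iteratedDerivWithin, iteratedFDerivWithin_congr_set h]

theorem exists_affine_of_iteratedDerivWithin_add_two_eq_zero {s : Set ℝ} (hs : IsOpen s)
    (hs' : IsPreconnected s) {n : ℕ} {f : ℝ → ℝ} (hf : ContDiffOn ℝ (n + 2) f s)
    (h : ∀ x ∈ s, iteratedDerivWithin (n + 2) f s x = 0) :
    ∃ p q : ℝ, ∀ x ∈ s, iteratedDerivWithin n f s x = p * x + q := by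
  have hderiv : ∀ k, ∀ x ∈ s,
      deriv (iteratedDerivWithin k f s) x = iteratedDerivWithin (k + 1) f s x := fun k x hx => by
    rw [← derivWithin_of_isOpen hs hx, iteratedDerivWithin_succ]
  obtain ⟨p, hp⟩ := hs.exists_is_const_of_deriv_eq_zero hs'
    (hf.differentiableOn_iteratedDerivWithin (m := n + 1) (by norm_cast; omega) hs.uniqueDiffOn)
    fun x hx => (hderiv (n + 1) x hx).trans (h x hx)
  obtain ⟨q, hq⟩ := hs.exists_eq_add_of_deriv_eq hs' (g := fun x => p * x)
    (hf.differentiableOn_iteratedDerivWithin (m := n) (by norm_cast; omega) hs.uniqueDiffOn)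
    (differentiableOn_id.const_mul p) fun x hx => by simp [hderiv n x hx, hp x hx]
  exact ⟨p, q, hq⟩

section Polynomials

open Polynomial

variable {𝕜 : Type*} [NontriviallyNormedField 𝕜]

theorem Polynomial.iteratedDeriv_eval (p : 𝕜[X]) (n : ℕ) :
    iteratedDeriv n (fun x => p.eval x) = fun x => (derivative^[n] p).eval x := by
  induction n generalizing p with
  | zero => simp
  | succ n ih =>
    have h : _root_.deriv (fun x => p.eval x) = fun x => p.derivative.eval x := by
      ext x; exact p.deriv
    rw [iteratedDeriv_succ', h, ih, Function.iterate_succ_apply]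

theorem Polynomial.iteratedDerivWithin_eval {s : Set 𝕜} (hs : UniqueDiffOn 𝕜 s) {x : 𝕜}
    (hx : x ∈ s) (p : 𝕜[X]) (n : ℕ) :
    iteratedDerivWithin n (fun x => p.eval x) s x = (derivative^[n] p).eval x := by
  rw [iteratedDerivWithin_eq_iteratedDeriv (f := fun x => p.eval x) hs
    (p.contDiff_aeval n).contDiffAt hx, iteratedDeriv_eval]

end Polynomials

section Interval

variable {a b ya yb sa sb : ℝ} {y z : ℝ → ℝ}

def Admissible (a b ya yb sa sb : ℝ) (y : ℝ → ℝ) : Prop :=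
  ContDiffOn ℝ 2 y (Icc a b) ∧ y a = ya ∧ y b = yb ∧
    derivWithin y (Icc a b) a = sa ∧ derivWithin y (Icc a b) b = sb

theorem Admissible.sub (hab : a ≤ b) (hy : Admissible a b ya yb sa sb y)
    (hz : Admissible a b ya yb sa sb z) : Admissible a b 0 0 0 0 (y - z) := by
  have ha : a ∈ Icc a b := left_mem_Icc.2 hab
  have hb : b ∈ Icc a b := right_mem_Icc.2 hab
  have hy1 := hy.1.differentiableOn two_ne_zero
  have hz1 := hz.1.differentiableOn two_ne_zero
  refine ⟨hy.1.sub hz.1, ?_, ?_, ?_, ?_⟩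
  · simp [hy.2.1, hz.2.1]
  · simp [hy.2.2.1, hz.2.2.1]
  · rw [derivWithin_sub (hy1 a ha) (hz1 a ha), hy.2.2.2.1, hz.2.2.2.1, sub_self]
  · rw [derivWithin_sub (hy1 b hb) (hz1 b hb), hy.2.2.2.2, hz.2.2.2.2, sub_self]

theorem integral_affine_mul_iteratedDerivWithin_two_eq_zero (hab : a < b) {h : ℝ → ℝ}
    (hh : Admissible a b 0 0 0 0 h) (p q : ℝ) :
    ∫ x in a..b, (p * x + q) * iteratedDerivWithin 2 h (Icc a b) x = 0 := by
  obtain ⟨hC2, ha, hb, ha', hb'⟩ := hh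
  have uq : UniqueDiffOn ℝ (Icc a b) := uniqueDiffOn_Icc hab
  set h' := derivWithin h (Icc a b)
  have hC1' : ContDiffOn ℝ 1 h' (Icc a b) := hC2.derivWithin uq (by norm_num)
  have hasDerivAt_of_Ioo : ∀ {u : ℝ → ℝ}, DifferentiableOn ℝ u (Icc a b) →
      ∀ x ∈ Ioo a b, HasDerivAt u (derivWithin u (Icc a b) x) x := fun hu x hx =>
    (hu x (Ioo_subset_Icc_self hx)).hasDerivWithinAt.hasDerivAt (Icc_mem_nhds hx.1 hx.2)
  have hprim : ∀ x ∈ Ioo a b, HasDerivAt (fun x => (p * x + q) * h' x - p * h x)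
      ((p * x + q) * iteratedDerivWithin 2 h (Icc a b) x) x := by
    intro x hx
    have H : HasDerivAt (fun x => (p * x + q) * h' x - p * h x)
        (p * 1 * h' x + (p * x + q) * derivWithin h' (Icc a b) x - p * h' x) x :=
      ((((hasDerivAt_id x).const_mul p).add_const q).mul
        (hasDerivAt_of_Ioo (hC1'.differentiableOn one_ne_zero) x hx)).sub
        ((hasDerivAt_of_Ioo (hC2.differentiableOn two_ne_zero) x hx).const_mul p)
    exact H.congr_deriv (by rw [iteratedDerivWithin_two]; ring)
  have hlin : Continuous fun x : ℝ => p * x + q := by fun_prop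
  rw [integral_eq_sub_of_hasDerivAt_of_le hab.le
    ((hlin.continuousOn.mul hC1'.continuousOn).sub (continuousOn_const.mul hC2.continuousOn)) hprim
    (hlin.continuousOn.mul (hC2.continuousOn_iteratedDerivWithin le_rfl uq)
      |>.intervalIntegrable_of_Icc hab.le)]
  simp [h', ha, hb, ha', hb']

theorem eqOn_zero_of_integral_sq_eq_zero (hab : a < b) {f : ℝ → ℝ}
    (hf : ContinuousOn f (Icc a b)) (h : ∫ x in a..b, f x ^ 2 = 0) : EqOn f 0 (Icc a b) := by
  intro x hx
  by_contra hfx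
  have hpos : 0 < ∫ x in a..b, f x ^ 2 := integral_pos hab (hf.pow 2) (fun _ _ => sq_nonneg _)
    ⟨x, hx, (pow_pos (abs_pos.2 hfx) 2).trans_eq (sq_abs _)⟩
  exact hpos.ne' h

theorem eqOn_zero_of_iteratedDerivWithin_two_eq_zero (hab : a < b) {h : ℝ → ℝ}
    (hC2 : ContDiffOn ℝ 2 h (Icc a b)) (ha : h a = 0) (ha' : derivWithin h (Icc a b) a = 0)
    (h2 : EqOn (iteratedDerivWithin 2 h (Icc a b)) 0 (Icc a b)) : EqOn h 0 (Icc a b) := by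
  have uq : UniqueDiffOn ℝ (Icc a b) := uniqueDiffOn_Icc hab
  have hd1 : ∀ x ∈ Icc a b, derivWithin h (Icc a b) x = 0 := fun x hx => by
    rw [constant_of_derivWithin_zero
      ((hC2.derivWithin uq (m := 1) (by norm_num)).differentiableOn one_ne_zero)
      (fun y hy => by rw [← iteratedDerivWithin_two]; exact h2 (Ico_subset_Icc_self hy)) x hx,
      ha']
  intro x hx
  rw [constant_of_derivWithin_zero (hC2.differentiableOn two_ne_zero)
    (fun y hy => hd1 y (Ico_subset_Icc_self hy)) x hx, ha, Pi.zero_apply]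

theorem eqOn_of_integral_sq_iteratedDerivWithin_two_sub_eq_zero (hab : a < b)
    (hy : Admissible a b ya yb sa sb y) (hz : Admissible a b ya yb sa sb z)
    (h : ∫ x in a..b, iteratedDerivWithin 2 (y - z) (Icc a b) x ^ 2 = 0) :
    EqOn y z (Icc a b) := by
  obtain ⟨hC2, ha, -, ha', -⟩ := hy.sub hab.le hz
  have h0 := eqOn_zero_of_iteratedDerivWithin_two_eq_zero hab hC2 ha ha' <|
    eqOn_zero_of_integral_sq_eq_zero hab
      (hC2.continuousOn_iteratedDerivWithin le_rfl (uniqueDiffOn_Icc hab)) h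
  exact fun x hx => sub_eq_zero.1 (h0 hx)

theorem integral_sq_sub_eq_add_integral_sq (hab : a < b) {g : ℝ → ℝ}
    (hy : Admissible a b ya yb sa sb y) (hz : Admissible a b ya yb sa sb z) {p q : ℝ}
    (hres : ∀ x ∈ Icc a b, iteratedDerivWithin 2 z (Icc a b) x - g x = p * x + q) :
    ∫ x in a..b, (iteratedDerivWithin 2 y (Icc a b) x - g x) ^ 2 =
      (∫ x in a..b, (iteratedDerivWithin 2 z (Icc a b) x - g x) ^ 2) +
        ∫ x in a..b, iteratedDerivWithin 2 (y - z) (Icc a b) x ^ 2 := by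
  have uq : UniqueDiffOn ℝ (Icc a b) := uniqueDiffOn_Icc hab
  set h2 := iteratedDerivWithin 2 (y - z) (Icc a b)
  have hh2 : ContinuousOn h2 (Icc a b) := (hy.1.sub hz.1).continuousOn_iteratedDerivWithin le_rfl uq
  have hlin : ContinuousOn (fun x : ℝ => p * x + q) (Icc a b) := by fun_prop
  calc ∫ x in a..b, (iteratedDerivWithin 2 y (Icc a b) x - g x) ^ 2
      = ∫ x in a..b, ((iteratedDerivWithin 2 z (Icc a b) x - g x) ^ 2
          + (2 * ((p * x + q) * h2 x) + h2 x ^ 2)) := by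
        refine integral_congr fun x hx => ?_
        rw [uIcc_of_le hab.le] at hx
        have hsub : h2 x =
            iteratedDerivWithin 2 y (Icc a b) x - iteratedDerivWithin 2 z (Icc a b) x :=
          iteratedDerivWithin_sub hx uq (hy.1 x hx) (hz.1 x hx)
        rw [← hres x hx, hsub]
        ring
    _ = (∫ x in a..b, (iteratedDerivWithin 2 z (Icc a b) x - g x) ^ 2) +
          (2 * ∫ x in a..b, (p * x + q) * h2 x) + ∫ x in a..b, h2 x ^ 2 := by
        have i1 : IntervalIntegrable (fun x => (iteratedDerivWithin 2 z (Icc a b) x - g x) ^ 2)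
            volume a b :=
          ((hlin.pow 2).congr fun x hx => by rw [hres x hx]; rfl).intervalIntegrable_of_Icc hab.le
        have i2 : IntervalIntegrable (fun x => 2 * ((p * x + q) * h2 x)) volume a b :=
          (continuousOn_const.mul (hlin.mul hh2)).intervalIntegrable_of_Icc hab.le
        have i3 : IntervalIntegrable (fun x => h2 x ^ 2) volume a b :=
          (hh2.pow 2).intervalIntegrable_of_Icc hab.le
        rw [integral_add i1 (i2.add i3), integral_add i2 i3, intervalIntegral.integral_const_mul,
          add_assoc]
    _ = _ := by
        rw [show ∫ x in a..b, (p * x + q) * h2 x = 0 from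
          integral_affine_mul_iteratedDerivWithin_two_eq_zero hab (hy.sub hab.le hz) p q,
          mul_zero, add_zero]

theorem eqOn_of_iteratedDerivWithin_four_eq (hab : a < b)
    (hy : Admissible a b ya yb sa sb y) (hz : Admissible a b ya yb sa sb z)
    (hy4 : ContDiffOn ℝ 4 y (Ioo a b)) (hz4 : ContDiffOn ℝ 4 z (Ioo a b))
    (h4 : EqOn (iteratedDerivWithin 4 y (Ioo a b)) (iteratedDerivWithin 4 z (Ioo a b)) (Ioo a b)) :
    EqOn y z (Icc a b) := by
  obtain ⟨p, q, hpq⟩ := exists_affine_of_iteratedDerivWithin_add_two_eq_zero (n := 2)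
    (f := y - z) isOpen_Ioo isPreconnected_Ioo (hy4.sub hz4) fun x hx => by
      rw [iteratedDerivWithin_sub hx isOpen_Ioo.uniqueDiffOn (hy4 x hx) (hz4 x hx), h4 hx,
        sub_self]
  refine eqOn_of_integral_sq_iteratedDerivWithin_two_sub_eq_zero hab hy hz ?_
  calc ∫ x in a..b, iteratedDerivWithin 2 (y - z) (Icc a b) x ^ 2
      = ∫ x in a..b, (p * x + q) * iteratedDerivWithin 2 (y - z) (Icc a b) x :=
        integral_congr_Ioo_of_le hab.le fun x hx => by
          rw [sq, iteratedDerivWithin_Icc_eq_Ioo 2 _ hx, hpq x hx]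
    _ = 0 := integral_affine_mul_iteratedDerivWithin_two_eq_zero hab (hy.sub hab.le hz) p q

end Interval

section Mode

open Polynomial

-- the mode `y*` written in the monomial basis
noncomputable def modePoly (x1 y1 θ0 θ1 κ0 κ1 : ℝ) : ℝ[X] :=
  let a2 := (3 * y1 + x1 * (θ1 - 2 * θ0)) / x1 ^ 2
  let a3 := (-2 * y1 + x1 * (θ0 - θ1)) / x1 ^ 3
  let k := (κ0 - κ1) / x1 ^ 3
  C θ0 * X + C (a2 + k * x1 ^ 3 / 2) * X ^ 2 + C (a3 - 2 * k * x1 ^ 2) * X ^ 3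
    + C (5 * k * x1 / 2) * X ^ 4 + C (-k) * X ^ 5

variable (x1 y1 θ0 θ1 κ0 κ1 : ℝ)

theorem eval_modePoly (x : ℝ) : (modePoly x1 y1 θ0 θ1 κ0 κ1).eval x =
    x * θ0 + (x ^ 3 / x1 ^ 3) * (-2 * y1 + x1 * (θ0 - θ1))
      + (x ^ 2 / x1 ^ 2) * (3 * y1 + x1 * (θ1 - 2 * θ0))
      + ((κ0 - κ1) / x1 ^ 3) * (x - x1) ^ 2 * (x1 / 2 - x) * x ^ 2 := by
  simp only [modePoly, eval_add, eval_mul, eval_C, eval_X, eval_pow]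
  ring

theorem admissible_modePoly (hx1 : 0 < x1) :
    Admissible 0 x1 0 y1 θ0 (-θ1) fun x => (modePoly x1 y1 θ0 θ1 κ0 κ1).eval x := by
  have uq : UniqueDiffOn ℝ (Icc 0 x1) := uniqueDiffOn_Icc hx1
  refine ⟨(modePoly x1 y1 θ0 θ1 κ0 κ1).contDiff_aeval 2 |>.contDiffOn, ?_, ?_, ?_, ?_⟩
  · simp [modePoly]
  · dsimp only
    rw [eval_modePoly]
    field_simp
    ring
  · rw [← iteratedDerivWithin_one, iteratedDerivWithin_eval uq (left_mem_Icc.2 hx1.le)]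
    simp [modePoly]
  · rw [← iteratedDerivWithin_one, iteratedDerivWithin_eval uq (right_mem_Icc.2 hx1.le)]
    simp only [modePoly, Function.iterate_one, derivative_add, derivative_C_mul_X,
      derivative_C_mul_X_pow, eval_add, eval_mul, eval_C, eval_X, eval_pow, Nat.cast_ofNat]
    field_simp
    ring

theorem exists_iteratedDerivWithin_two_modePoly_sub_eq (hx1 : 0 < x1) : ∃ p q : ℝ,
    ∀ x ∈ Icc 0 x1, iteratedDerivWithin 2 (fun x => (modePoly x1 y1 θ0 θ1 κ0 κ1).eval x)
      (Icc 0 x1) x - (κ1 - κ0) * (20 * (x - x1) * (x - x1 / 2) * x) / x1 ^ 3 = p * x + q := by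
  refine ⟨6 * ((-2 * y1 + x1 * (θ0 - θ1)) / x1 ^ 3) - 2 * ((κ0 - κ1) / x1 ^ 3) * x1 ^ 2,
    2 * ((3 * y1 + x1 * (θ1 - 2 * θ0)) / x1 ^ 2) + (κ0 - κ1) / x1 ^ 3 * x1 ^ 3,
    fun x hx => ?_⟩
  rw [iteratedDerivWithin_eval (uniqueDiffOn_Icc hx1) hx]
  simp only [modePoly, Function.iterate_succ_apply, Function.iterate_zero_apply, derivative_add,
    derivative_C_mul_X, derivative_C_mul_X_pow, derivative_C, eval_add, eval_mul,
    eval_C, eval_X, eval_pow, eval_zero, Nat.cast_ofNat]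
  ring

theorem iteratedDeriv_four_modePoly_eval (x : ℝ) :
    iteratedDeriv 4 (fun x => (modePoly x1 y1 θ0 θ1 κ0 κ1).eval x) x =
      (κ1 - κ0) * iteratedDeriv 2 (fun x => 20 * (x - x1) * (x - x1 / 2) * x) x / x1 ^ 3 := by
  have hc : (fun x => 20 * (x - x1) * (x - x1 / 2) * x) =
      fun x => (C (10 * x1 ^ 2) * X + C (-30 * x1) * X ^ 2 + C 20 * X ^ 3).eval x := by
    funext x
    simp only [eval_add, eval_mul, eval_C, eval_X, eval_pow]
    ring
  rw [hc, iteratedDeriv_eval, iteratedDeriv_eval]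
  simp only [modePoly, Function.iterate_succ_apply, Function.iterate_zero_apply, derivative_add,
    derivative_C_mul_X, derivative_C_mul_X_pow, derivative_C, derivative_zero, eval_add, eval_mul,
    eval_C, eval_X, eval_pow, eval_zero, Nat.cast_ofNat]
  ring

end Mode

theorem stmt_19 (x1 : ℝ) (hx1 : 0 < x1) (y1 θ0 θ1 κ0 κ1 : ℝ) :
    let c : ℝ → ℝ := fun x => 20 * (x - x1) * (x - x1 / 2) * x
    let g : ℝ → ℝ := fun x => (κ1 - κ0) * c x / x1 ^ 3
    let ystar : ℝ → ℝ := fun x =>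
      x * θ0 + (x ^ 3 / x1 ^ 3) * (-2 * y1 + x1 * (θ0 - θ1))
        + (x ^ 2 / x1 ^ 2) * (3 * y1 + x1 * (θ1 - 2 * θ0))
        + ((κ0 - κ1) / x1 ^ 3) * (x - x1) ^ 2 * (x1 / 2 - x) * x ^ 2
    -- the admissible class: C² on [0, x₁] with the prescribed boundary values and slopes
    let Adm : (ℝ → ℝ) → Prop := fun y =>
      ContDiffOn ℝ 2 y (Set.Icc 0 x1) ∧ y 0 = 0 ∧ y x1 = y1 ∧
      derivWithin y (Set.Icc 0 x1) 0 = θ0 ∧ derivWithin y (Set.Icc 0 x1) x1 = -θ1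
    -- the energy E(y) = ∫₀^{x₁} (y''(x) − g(x))² dx
    let E : (ℝ → ℝ) → ℝ := fun y =>
      ∫ x in (0 : ℝ)..x1, (iteratedDerivWithin 2 y (Set.Icc 0 x1) x - g x) ^ 2
    -- y* is admissible,
    Adm ystar ∧
    -- it minimizes E over the admissible class,
    (∀ y : ℝ → ℝ, Adm y → E ystar ≤ E y) ∧
    -- uniquely so,
    (∀ y : ℝ → ℝ, Adm y → E y = E ystar → Set.EqOn y ystar (Set.Icc 0 x1)) ∧
    -- y* satisfies the Euler–Lagrange equation y⁗ = (κ₁ − κ₀)c''/x₁³ on (0, x₁),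
    (∀ x ∈ Set.Ioo 0 x1, iteratedDeriv 4 ystar x = (κ1 - κ0) * iteratedDeriv 2 c x / x1 ^ 3) ∧
    -- and it is the unique admissible function doing so:
    (∀ y : ℝ → ℝ, Adm y → ContDiffOn ℝ 4 y (Set.Ioo 0 x1) →
      (∀ x ∈ Set.Ioo 0 x1,
        iteratedDerivWithin 4 y (Set.Ioo 0 x1) x = (κ1 - κ0) * iteratedDeriv 2 c x / x1 ^ 3) →
      Set.EqOn y ystar (Set.Icc 0 x1)) := by
  intro c g ystar Adm E
  have hys : ystar = fun x => (modePoly x1 y1 θ0 θ1 κ0 κ1).eval x :=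
    funext fun x => (eval_modePoly x1 y1 θ0 θ1 κ0 κ1 x).symm
  have hAdm : Adm ystar := hys ▸ admissible_modePoly x1 y1 θ0 θ1 κ0 κ1 hx1
  obtain ⟨p, q, hres⟩ := exists_iteratedDerivWithin_two_modePoly_sub_eq x1 y1 θ0 θ1 κ0 κ1 hx1
  have hsplit : ∀ y, Adm y →
      E y = E ystar + ∫ x in 0..x1, iteratedDerivWithin 2 (y - ystar) (Icc 0 x1) x ^ 2 :=
    fun y hy => integral_sq_sub_eq_add_integral_sq hx1 hy hAdm (hys ▸ hres)
  have hEL : ∀ x, iteratedDeriv 4 ystar x = (κ1 - κ0) * iteratedDeriv 2 c x / x1 ^ 3 :=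
    hys ▸ iteratedDeriv_four_modePoly_eval x1 y1 θ0 θ1 κ0 κ1
  refine ⟨hAdm, fun y hy => ?_, fun y hy hE => ?_, fun x _ => hEL x, fun y hy hy4 h4 => ?_⟩
  · rw [hsplit y hy]
    exact le_add_of_nonneg_right (integral_nonneg hx1.le fun _ _ => sq_nonneg _)
  · exact eqOn_of_integral_sq_iteratedDerivWithin_two_sub_eq_zero hx1 hy hAdm
      (by linarith [hsplit y hy])
  · refine eqOn_of_iteratedDerivWithin_four_eq hx1 hy hAdm hy4
      (by simp only [ystar]; fun_prop) fun x hx => ?_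
    rw [h4 x hx, iteratedDerivWithin_of_isOpen isOpen_Ioo hx, hEL x]
end
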